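/- Let d, T be positive integers, let L¹, …, L^N ∈ 𝕃^reg, and let λ₁, …, λ_N > 0 with ∑_{i=1}^N λ_i = 1. Then every minimizer L̄ ∈ 𝕃 of the adapted Bures–Wasserstein barycenter functional G(L) = ∑_{i=1}^N λ_i d_ABW(L, L^i)² over 𝕃 is itself regular, i.e., L̄ ∈ 𝕃^reg. -/

import Mathlib

open Matrix

/-- Squared Frobenius norm of a real matrix: `‖A‖_F² = tr(Aᵀ A)`. -/
noncomputable def frobSq {m n : Type*} [Fintype m] [Fintype n] (A : Matrix m n ℝ) : ℝ :=
  Matrix.trace (Aᵀ * A)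

/-- `O ∈ O(d)`: a real orthogonal matrix. -/
def IsOrth {d : ℕ} (O : Matrix (Fin d) (Fin d) ℝ) : Prop :=
  O * Oᵀ = 1 ∧ Oᵀ * O = 1

/-- `L ∈ 𝕃`: block-lower triangular w.r.t. `T` blocks of size `d`
(indices are pairs `(i, t)` with `i : Fin d` the within-block index and `t : Fin T`
the block index); the block `L_{t,s}` vanishes for `t < s`. -/
def BlockLT {d T : ℕ} (L : Matrix (Fin d × Fin T) (Fin d × Fin T) ℝ) : Prop :=
  ∀ p q : Fin d × Fin T, p.2 < q.2 → L p q = 0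

/-- `O ∈ 𝕆`: block-diagonal with orthogonal `d × d` diagonal blocks. -/
def BlockOrth {d T : ℕ} (O : Matrix (Fin d × Fin T) (Fin d × Fin T) ℝ) : Prop :=
  ∃ f : Fin T → Matrix (Fin d) (Fin d) ℝ, (∀ t, IsOrth (f t)) ∧ O = Matrix.blockDiagonal f

/-- Truncated `t`-th column `L̃_t ∈ ℝ^{(T−t)d×d}` (0-based `t`): the rows of the `t`-th block
column of `L` from block row `t` on. -/
def truncCol {d T : ℕ} (L : Matrix (Fin d × Fin T) (Fin d × Fin T) ℝ) (t : Fin T) :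
    Matrix (Fin (T - t.val) × Fin d) (Fin d) ℝ :=
  fun p j => L (p.2, ⟨t.val + p.1.val, by have := p.1.isLt; omega⟩) (j, t)

/-- Column covariance `Σ̃_t^L = L̃_t L̃_tᵀ`. -/
noncomputable def colCov {d T : ℕ} (L : Matrix (Fin d × Fin T) (Fin d × Fin T) ℝ) (t : Fin T) :
    Matrix (Fin (T - t.val) × Fin d) (Fin (T - t.val) × Fin d) ℝ :=
  truncCol L t * (truncCol L t)ᵀ

/-- The positive semidefinite square root of a PSD matrix (junk value `0` otherwise). -/
noncomputable def sqrtPSD {n : Type*} [Fintype n] [DecidableEq n] (P : Matrix n n ℝ) :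
    Matrix n n ℝ :=
  by classical exact if h : P.PosSemidef then
    (h.1.eigenvectorUnitary : Matrix n n ℝ) * Matrix.diagonal (fun i => Real.sqrt (h.1.eigenvalues i)) *
      (star h.1.eigenvectorUnitary : Matrix n n ℝ) else 0

/-- The Bures–Wasserstein distance between (PSD) matrices. -/
noncomputable def dBW {n : Type*} [Fintype n] [DecidableEq n] (S1 S2 : Matrix n n ℝ) : ℝ :=
  Real.sqrt (Matrix.trace S1 + Matrix.trace S2 -
    2 * Matrix.trace (sqrtPSD (sqrtPSD S2 * S1 * sqrtPSD S2)))

/-- The squared adapted Bures–Wasserstein distance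
`d_ABW(L,M)² = min_{O ∈ 𝕆} ‖L − MO‖_F²` (the minimum over the compact group `𝕆` is attained,
so it equals the infimum). -/
noncomputable def dABWsq {d T : ℕ} (L M : Matrix (Fin d × Fin T) (Fin d × Fin T) ℝ) : ℝ :=
  sInf {x : ℝ | ∃ O, BlockOrth O ∧ x = frobSq (L - M * O)}

/-- The `t`-th diagonal `d × d` block of a `dT × dT` matrix. -/
def diagBlock {d T : ℕ} (C : Matrix (Fin d × Fin T) (Fin d × Fin T) ℝ) (t : Fin T) :
    Matrix (Fin d) (Fin d) ℝ :=
  fun i j => C (i, t) (j, t)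

/-- `L ∈ 𝕃^reg`: each diagonal block `(LᵀL)_{t,t}` is positive definite. -/
def RegBlock {d T : ℕ} (L : Matrix (Fin d × Fin T) (Fin d × Fin T) ℝ) : Prop :=
  ∀ t : Fin T, (diagBlock (Lᵀ * L) t).PosDef

/-! ### Auxiliary material for the proof -/

/-- Embed a `d`-vector into the `t`-th block of a `dT`-vector. -/
def hatv {d T : ℕ} (t : Fin T) (x : Fin d → ℝ) : Fin d × Fin T → ℝ :=
  fun p => if p.2 = t then x p.1 else 0

section basics
variable {m n : Type*} [Fintype m] [Fintype n]

lemma frobSq_eq_sum (A : Matrix m n ℝ) : frobSq A = ∑ q, ∑ p, A p q * A p q := by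
  simp [frobSq, Matrix.trace, Matrix.diag, Matrix.mul_apply, Matrix.transpose_apply]

lemma frobSq_nonneg (A : Matrix m n ℝ) : 0 ≤ frobSq A := by
  rw [frobSq_eq_sum]
  exact Finset.sum_nonneg fun q _ => Finset.sum_nonneg fun p _ => mul_self_nonneg _

lemma trace_transpose_mul_comm (A B : Matrix m n ℝ) :
    Matrix.trace (Aᵀ * B) = Matrix.trace (Bᵀ * A) := by
  rw [← Matrix.trace_transpose (Bᵀ * A), Matrix.transpose_mul, Matrix.transpose_transpose]

lemma frobSq_sub (M A : Matrix m n ℝ) :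
    frobSq (M - A) = frobSq M - 2 * Matrix.trace (Aᵀ * M) + frobSq A := by
  simp only [frobSq, Matrix.transpose_sub, Matrix.sub_mul, Matrix.mul_sub, Matrix.trace_sub]
  rw [trace_transpose_mul_comm M A]
  ring

lemma frobSq_add_smul (M E : Matrix m n ℝ) (e : ℝ) :
    frobSq (M + e • E) = frobSq M + 2 * e * Matrix.trace (Eᵀ * M) + e^2 * frobSq E := by
  simp only [frobSq, Matrix.transpose_add, Matrix.add_mul, Matrix.mul_add, Matrix.trace_add,
    Matrix.transpose_smul, Matrix.smul_mul, Matrix.mul_smul, Matrix.trace_smul, smul_smul,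
    smul_eq_mul]
  rw [trace_transpose_mul_comm M E]
  ring

lemma trace_transpose_mul_vecMulVec (M : Matrix m n ℝ) (x : m → ℝ) (y : n → ℝ) :
    Matrix.trace (Mᵀ * Matrix.vecMulVec x y) = x ⬝ᵥ M.mulVec y := by
  simp only [Matrix.trace, Matrix.diag, Matrix.mul_apply, Matrix.transpose_apply,
    Matrix.vecMulVec_apply, dotProduct, Matrix.mulVec]
  rw [Finset.sum_comm]
  refine Finset.sum_congr rfl fun k _ => ?_
  rw [Finset.mul_sum]
  exact Finset.sum_congr rfl fun p _ => by ring

lemma trace_transpose_vecMulVec_mul (M : Matrix m n ℝ) (x : m → ℝ) (y : n → ℝ) :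
    Matrix.trace ((Matrix.vecMulVec x y)ᵀ * M) = x ⬝ᵥ M.mulVec y := by
  rw [← Matrix.trace_transpose, Matrix.transpose_mul, Matrix.transpose_transpose,
    trace_transpose_mul_vecMulVec]

end basics

section square
variable {n : Type*} [Fintype n]

lemma frobSq_mul_orth [DecidableEq n] (A O : Matrix n n ℝ) (hO : O * Oᵀ = 1) : frobSq (A * O) = frobSq A := by
  simp only [frobSq, Matrix.transpose_mul]
  rw [show Oᵀ * Aᵀ * (A * O) = Oᵀ * (Aᵀ * A * O) by noncomm_ring,
    Matrix.trace_mul_comm, Matrix.mul_assoc, hO, Matrix.mul_one]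

lemma mul_vecMulVec' {m p : Type*} [Fintype m] [Fintype p]
    (M : Matrix m n ℝ) (x : n → ℝ) (y : p → ℝ) :
    M * Matrix.vecMulVec x y = Matrix.vecMulVec (M.mulVec x) y := by
  funext a b
  simp only [Matrix.mul_apply, Matrix.vecMulVec_apply, Matrix.mulVec, dotProduct,
    Finset.sum_mul]
  exact Finset.sum_congr rfl fun k _ => by ring

end square

section blocks
variable {d T : ℕ} (t : Fin T)

lemma trace_blockDiagonal_mul (g : Fin T → Matrix (Fin d) (Fin d) ℝ)
    (C : Matrix (Fin d × Fin T) (Fin d × Fin T) ℝ) :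
    Matrix.trace (Matrix.blockDiagonal g * C) = ∑ s, Matrix.trace (g s * diagBlock C s) := by
  classical
  simp only [Matrix.trace, Matrix.diag, Matrix.mul_apply, diagBlock]
  rw [Fintype.sum_prod_type, Finset.sum_comm]
  refine Finset.sum_congr rfl fun s _ => Finset.sum_congr rfl fun k _ => ?_
  rw [Fintype.sum_prod_type]
  refine Finset.sum_congr rfl fun l _ => ?_
  simp [Matrix.blockDiagonal_apply]

lemma dot_diagBlock_mulVec (C : Matrix (Fin d × Fin T) (Fin d × Fin T) ℝ) (x y : Fin d → ℝ) :
    x ⬝ᵥ (diagBlock C t).mulVec y = (hatv t x) ⬝ᵥ C.mulVec (hatv t y) := by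
  classical
  simp only [dotProduct, Matrix.mulVec, diagBlock, hatv]
  simp only [Fintype.sum_prod_type]
  simp only [ite_mul, mul_ite, zero_mul, mul_zero, Finset.sum_ite_eq, Finset.sum_ite_eq',
    Finset.mem_univ, if_true]

lemma dot_transpose_mul_mulVec (P : Matrix (Fin d × Fin T) (Fin d × Fin T) ℝ)
    (x y : Fin d × Fin T → ℝ) :
    x ⬝ᵥ (Pᵀ * P).mulVec y = (P.mulVec x) ⬝ᵥ (P.mulVec y) := by
  rw [← Matrix.mulVec_mulVec, Matrix.dotProduct_mulVec, Matrix.vecMul_transpose]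

lemma diagBlock_mulVec (C : Matrix (Fin d × Fin T) (Fin d × Fin T) ℝ) (x : Fin d → ℝ) :
    (diagBlock C t).mulVec x = fun j => (C.mulVec (hatv t x)) (j, t) := by
  classical
  funext j
  simp only [Matrix.mulVec, diagBlock, hatv, dotProduct]
  simp only [Fintype.sum_prod_type]
  simp only [mul_ite, mul_zero, Finset.sum_ite_eq, Finset.sum_ite_eq', Finset.mem_univ, if_true]

lemma diagBlock_vecMulVec_ne (α : Fin d × Fin T → ℝ) (v : Fin d → ℝ) (s : Fin T) (hs : s ≠ t) :
    diagBlock (Matrix.vecMulVec α (hatv t v)) s = 0 := by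
  funext i j
  simp [diagBlock, Matrix.vecMulVec_apply, hatv, hs]

lemma diagBlock_vecMulVec_eq (α : Fin d × Fin T → ℝ) (v : Fin d → ℝ) :
    diagBlock (Matrix.vecMulVec α (hatv t v)) t = Matrix.vecMulVec (fun j => α (j, t)) v := by
  funext i j
  simp [diagBlock, Matrix.vecMulVec_apply, hatv]

lemma dot_hat_column (A : Matrix (Fin d × Fin T) (Fin d × Fin T) ℝ) (u : Fin d × Fin T → ℝ)
    (x : Fin d → ℝ) :
    (x ⬝ᵥ fun j => (Aᵀ.mulVec u) (j, t)) = (A.mulVec (hatv t x)) ⬝ᵥ u := by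
  classical
  simp only [dotProduct, Matrix.mulVec, Matrix.transpose_apply, hatv]
  simp only [Fintype.sum_prod_type]
  simp only [mul_ite, mul_zero, Finset.sum_ite_eq, Finset.sum_ite_eq', Finset.mem_univ, if_true]
  simp only [Finset.mul_sum, Finset.sum_mul]
  rw [Finset.sum_comm]
  refine Finset.sum_congr rfl fun a _ => ?_
  rw [Finset.sum_comm]
  exact Finset.sum_congr rfl fun s _ => Finset.sum_congr rfl fun j _ => by ring

lemma diagBlock_add (C D : Matrix (Fin d × Fin T) (Fin d × Fin T) ℝ) :
    diagBlock (C + D) t = diagBlock C t + diagBlock D t := rfl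

lemma diagBlock_smul (e : ℝ) (C : Matrix (Fin d × Fin T) (Fin d × Fin T) ℝ) :
    diagBlock (e • C) t = e • diagBlock C t := rfl

end blocks

section compact
variable {d : ℕ}

lemma isOrth_one : IsOrth (1 : Matrix (Fin d) (Fin d) ℝ) := by
  constructor <;> simp

lemma isOrth_mul {A B : Matrix (Fin d) (Fin d) ℝ} (hA : IsOrth A) (hB : IsOrth B) :
    IsOrth (A * B) := by
  obtain ⟨hA1, hA2⟩ := hA
  obtain ⟨hB1, hB2⟩ := hB
  constructor
  · rw [Matrix.transpose_mul]
    calc A * B * (Bᵀ * Aᵀ) = A * (B * Bᵀ) * Aᵀ := by noncomm_ring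
    _ = 1 := by rw [hB1, Matrix.mul_one, hA1]
  · rw [Matrix.transpose_mul]
    calc Bᵀ * Aᵀ * (A * B) = Bᵀ * (Aᵀ * A) * B := by noncomm_ring
    _ = 1 := by rw [hA2, Matrix.mul_one, hB2]

lemma isOrth_entry_le {Q : Matrix (Fin d) (Fin d) ℝ} (hQ : IsOrth Q) (i j : Fin d) :
    Q i j ∈ Set.Icc (-1 : ℝ) 1 := by
  have h1 : (Q * Qᵀ) i i = 1 := by rw [hQ.1]; simp [Matrix.one_apply]
  have h2 : ∑ k, Q i k * Q i k = 1 := by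
    simpa [Matrix.mul_apply, Matrix.transpose_apply] using h1
  have h3 : Q i j * Q i j ≤ 1 := by
    rw [← h2]
    exact Finset.single_le_sum (f := fun k => Q i k * Q i k)
      (fun k _ => mul_self_nonneg _) (Finset.mem_univ j)
  have h4 : |Q i j| ≤ 1 := abs_le_of_sq_le_sq (by simpa [sq] using h3) (by norm_num)
  exact ⟨neg_le_of_abs_le h4, le_of_abs_le h4⟩

lemma continuous_traceObj (B : Matrix (Fin d) (Fin d) ℝ) :
    Continuous fun Q : Matrix (Fin d) (Fin d) ℝ => Matrix.trace (Qᵀ * B) :=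
  Continuous.matrix_trace (Continuous.matrix_mul (continuous_id.matrix_transpose) continuous_const)

lemma isCompact_isOrth : IsCompact {Q : Matrix (Fin d) (Fin d) ℝ | IsOrth Q} := by
  have hK : IsCompact (Set.pi (Set.univ : Set (Fin d))
      (fun _ => Set.pi (Set.univ : Set (Fin d)) (fun _ => Set.Icc (-1 : ℝ) 1))) :=
    isCompact_univ_pi fun _ => isCompact_univ_pi fun _ => isCompact_Icc
  refine hK.of_isClosed_subset ?_ ?_
  · have h1 : IsClosed {Q : Matrix (Fin d) (Fin d) ℝ | Q * Qᵀ = 1} :=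
      isClosed_eq (Continuous.matrix_mul continuous_id continuous_id.matrix_transpose)
        continuous_const
    have h2 : IsClosed {Q : Matrix (Fin d) (Fin d) ℝ | Qᵀ * Q = 1} :=
      isClosed_eq (Continuous.matrix_mul continuous_id.matrix_transpose continuous_id)
        continuous_const
    exact h1.inter h2
  · intro Q hQ
    rw [Set.mem_pi]
    intro i _
    rw [Set.mem_pi]
    intro j _
    exact isOrth_entry_le hQ i j

lemma exists_max_orth (B : Matrix (Fin d) (Fin d) ℝ) :
    ∃ Q, IsOrth Q ∧ ∀ R, IsOrth R → Matrix.trace (Rᵀ * B) ≤ Matrix.trace (Qᵀ * B) := by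
  obtain ⟨Q, hQmem, hQmax⟩ := isCompact_isOrth.exists_isMaxOn ⟨1, isOrth_one⟩
    (continuous_traceObj B).continuousOn
  exact ⟨Q, hQmem, fun R hR => hQmax hR⟩

end compact

section householder
variable {d : ℕ}

lemma vecMulVec_self_transpose (v : Fin d → ℝ) :
    (Matrix.vecMulVec v v)ᵀ = Matrix.vecMulVec v v := by
  funext i j
  simp [Matrix.vecMulVec_apply, mul_comm]

lemma vecMulVec_mul_self (v : Fin d → ℝ) :
    Matrix.vecMulVec v v * Matrix.vecMulVec v v = (v ⬝ᵥ v) • Matrix.vecMulVec v v := by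
  funext i j
  simp only [Matrix.mul_apply, Matrix.vecMulVec_apply, Matrix.smul_apply, dotProduct,
    smul_eq_mul, Finset.sum_mul]
  exact Finset.sum_congr rfl fun k _ => by ring

lemma vecMulVec_mulVec (v w : Fin d → ℝ) :
    (Matrix.vecMulVec v v).mulVec w = (v ⬝ᵥ w) • v := by
  funext i
  simp only [Matrix.mulVec, Matrix.vecMulVec_apply, dotProduct, Pi.smul_apply, smul_eq_mul,
    Finset.sum_mul]
  exact Finset.sum_congr rfl fun k _ => by ring

/-- Householder reflection `H = 1 - (2/(v·v)) vvᵀ`. -/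
noncomputable def hh (v : Fin d → ℝ) : Matrix (Fin d) (Fin d) ℝ :=
  1 - (2 / (v ⬝ᵥ v)) • Matrix.vecMulVec v v

lemma hh_transpose (v : Fin d → ℝ) : (hh v)ᵀ = hh v := by
  simp [hh, Matrix.transpose_sub, Matrix.transpose_smul, vecMulVec_self_transpose]

lemma hh_mul_self (v : Fin d → ℝ) (hv : v ⬝ᵥ v ≠ 0) : hh v * hh v = 1 := by
  set a := v ⬝ᵥ v with ha
  set P := Matrix.vecMulVec v v with hPdef
  have hP : P * P = a • P := vecMulVec_mul_self v
  have expand : (1 - (2/a) • P) * (1 - (2/a) • P)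
      = 1 - (2/a) • P - ((2/a) • P - ((2/a) * ((2/a) * a)) • P) := by
    rw [Matrix.sub_mul, Matrix.one_mul, Matrix.mul_sub, Matrix.mul_one, Matrix.smul_mul,
      Matrix.mul_smul, hP, smul_smul, smul_smul, mul_assoc]
  have key : (2/a) * ((2/a) * a) = 2/a + 2/a := by
    field_simp
    norm_num
  rw [hh, expand, key, add_smul]
  abel

lemma hh_isOrth (v : Fin d → ℝ) (hv : v ⬝ᵥ v ≠ 0) : IsOrth (hh v) := by
  constructor
  · rw [hh_transpose, hh_mul_self v hv]
  · rw [hh_transpose, hh_mul_self v hv]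

lemma hh_mulVec_self (v : Fin d → ℝ) (hv : v ⬝ᵥ v ≠ 0) : (hh v).mulVec v = -v := by
  simp only [hh, Matrix.sub_mulVec, Matrix.one_mulVec, Matrix.smul_mulVec,
    _root_.vecMulVec_mulVec, smul_smul]
  rw [div_mul_cancel₀ _ hv]
  funext i
  simp
  ring

lemma trace_hh_mul (v : Fin d → ℝ) (hv : v ⬝ᵥ v ≠ 0) (S : Matrix (Fin d) (Fin d) ℝ)
    (hS : S.mulVec v = 0) : Matrix.trace (hh v * S) = Matrix.trace S := by
  simp only [hh, Matrix.sub_mul, Matrix.one_mul, Matrix.smul_mul, Matrix.trace_sub,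
    Matrix.trace_smul]
  have : Matrix.trace (Matrix.vecMulVec v v * S) = v ⬝ᵥ S.mulVec v := by
    simp only [Matrix.trace, Matrix.diag, Matrix.mul_apply, Matrix.vecMulVec_apply, dotProduct,
      Matrix.mulVec]
    rw [Finset.sum_comm]
    refine Finset.sum_congr rfl fun k _ => ?_
    rw [Finset.mul_sum]
    exact Finset.sum_congr rfl fun p _ => by ring
  rw [this, hS]
  simp

/-- There is a maximizer `Q` of `tr(Qᵀ B)` over `O(d)`, with prescribed action on a
kernel vector `v` of `B`, in both signs. -/
lemma exists_max_orth_signs (B : Matrix (Fin d) (Fin d) ℝ)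
    (hex : ∃ Q, IsOrth Q ∧ ∀ R, IsOrth R → Matrix.trace (Rᵀ * B) ≤ Matrix.trace (Qᵀ * B))
    (v : Fin d → ℝ) (hv : v ⬝ᵥ v ≠ 0) (hBv : B.mulVec v = 0) :
    ∃ Q Q', IsOrth Q ∧ IsOrth Q' ∧
      (∀ R, IsOrth R → Matrix.trace (Rᵀ * B) ≤ Matrix.trace (Qᵀ * B)) ∧
      Matrix.trace (Q'ᵀ * B) = Matrix.trace (Qᵀ * B) ∧
      Q'.mulVec v = -(Q.mulVec v) := by
  obtain ⟨Q, hQ, hmax⟩ := hex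
  refine ⟨Q, Q * hh v, hQ, ?_, hmax, ?_, ?_⟩
  · exact isOrth_mul hQ (hh_isOrth v hv)
  · rw [Matrix.transpose_mul, hh_transpose, Matrix.mul_assoc]
    exact trace_hh_mul v hv (Qᵀ * B) (by rw [← Matrix.mulVec_mulVec, hBv, Matrix.mulVec_zero])
  · rw [← Matrix.mulVec_mulVec, hh_mulVec_self v hv, Matrix.mulVec_neg]

end householder


section expand
variable {d T : ℕ}

lemma blockDiagonal_orth (g : Fin T → Matrix (Fin d) (Fin d) ℝ) (hg : ∀ s, IsOrth (g s)) :
    Matrix.blockDiagonal g * (Matrix.blockDiagonal g)ᵀ = 1 := by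
  rw [Matrix.blockDiagonal_transpose, ← Matrix.blockDiagonal_mul,
    show (fun s => g s * (g s)ᵀ) = (fun _ => (1 : Matrix (Fin d) (Fin d) ℝ)) from
      funext fun s => (hg s).1,
    show (fun _ : Fin T => (1 : Matrix (Fin d) (Fin d) ℝ)) = 1 from rfl,
    Matrix.blockDiagonal_one]

lemma frob_expand (M A : Matrix (Fin d × Fin T) (Fin d × Fin T) ℝ)
    (g : Fin T → Matrix (Fin d) (Fin d) ℝ) (hg : ∀ s, IsOrth (g s)) :
    frobSq (M - A * Matrix.blockDiagonal g)
      = frobSq M + frobSq A - 2 * ∑ s, Matrix.trace ((g s)ᵀ * diagBlock (Aᵀ * M) s) := by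
  rw [frobSq_sub, frobSq_mul_orth A _ (blockDiagonal_orth g hg)]
  rw [Matrix.transpose_mul, Matrix.mul_assoc, Matrix.blockDiagonal_transpose,
    trace_blockDiagonal_mul]
  ring

end expand

/-- If all inputs are regular, every minimizer of the adapted barycenter
functional over `𝕃` is regular. -/
theorem stmt10 (d T N : ℕ) (hd : 0 < d) (hT : 0 < T)
    (L : Fin N → Matrix (Fin d × Fin T) (Fin d × Fin T) ℝ) (hL : ∀ i, BlockLT (L i))
    (hreg : ∀ i, RegBlock (L i))
    (lam : Fin N → ℝ) (hlam : ∀ i, 0 < lam i) (hsum : ∑ i, lam i = 1)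
    (Lbar : Matrix (Fin d × Fin T) (Fin d × Fin T) ℝ) (hLbar : BlockLT Lbar)
    (hmin : ∀ K, BlockLT K →
      (∑ i, lam i * dABWsq Lbar (L i)) ≤ ∑ i, lam i * dABWsq K (L i)) :
    RegBlock Lbar := by
  classical
  intro t
  by_contra hnpd
  have hN : 0 < N := by
    rcases Nat.eq_zero_or_pos N with h | h
    · subst h; simp at hsum
    · exact h
  set i0 : Fin N := ⟨0, hN⟩ with hi0
  -- symmetry of the diagonal Gram blocks
  have herm : ∀ P : Matrix (Fin d × Fin T) (Fin d × Fin T) ℝ,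
      (diagBlock (Pᵀ * P) t).IsHermitian := by
    intro P
    show (diagBlock (Pᵀ * P) t)ᴴ = _
    funext i j
    simp only [Matrix.conjTranspose_apply, diagBlock, Matrix.mul_apply, Matrix.transpose_apply,
      star_trivial]
    exact Finset.sum_congr rfl fun a _ => mul_comm _ _
  -- quadratic form identity
  have quad : ∀ (P : Matrix (Fin d × Fin T) (Fin d × Fin T) ℝ) (x : Fin d → ℝ),
      x ⬝ᵥ (diagBlock (Pᵀ * P) t).mulVec x
        = (P.mulVec (hatv t x)) ⬝ᵥ (P.mulVec (hatv t x)) := by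
    intro P x
    rw [dot_diagBlock_mulVec, dot_transpose_mul_mulVec]
  -- a kernel direction of the degenerate block
  obtain ⟨v, hv0, hvq⟩ : ∃ x : Fin d → ℝ, x ≠ 0 ∧
      ¬ (0 < x ⬝ᵥ (diagBlock (Lbarᵀ * Lbar) t).mulVec x) := by
    by_contra hcon
    push_neg at hcon
    refine hnpd (Matrix.PosDef.of_dotProduct_mulVec_pos (herm Lbar) fun x hx => ?_)
    simpa [star_trivial] using hcon x hx
  have hker : Lbar.mulVec (hatv t v) = 0 := by
    have h3 : 0 ≤ (Lbar.mulVec (hatv t v)) ⬝ᵥ (Lbar.mulVec (hatv t v)) :=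
      Finset.sum_nonneg fun p _ => mul_self_nonneg _
    have h2 := quad Lbar v
    have h4 := le_of_not_gt hvq
    rw [h2] at h4
    exact dotProduct_self_eq_zero.mp (le_antisymm h4 h3)
  have hvv : v ⬝ᵥ v ≠ 0 := fun h => hv0 (dotProduct_self_eq_zero.mp h)
  -- per-input diagonal blocks and their maximizing rotations
  set B : Fin N → Matrix (Fin d) (Fin d) ℝ := fun i => diagBlock ((L i)ᵀ * Lbar) t with hB
  have hBv : ∀ i, (B i).mulVec v = 0 := by
    intro i
    rw [hB]
    simp only
    rw [diagBlock_mulVec]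
    funext j
    rw [← Matrix.mulVec_mulVec, hker, Matrix.mulVec_zero]
    rfl
  have hmaxi : ∀ i : Fin N, ∃ Q Q', IsOrth Q ∧ IsOrth Q' ∧
      (∀ R, IsOrth R → Matrix.trace (Rᵀ * B i) ≤ Matrix.trace (Qᵀ * B i)) ∧
      Matrix.trace (Q'ᵀ * B i) = Matrix.trace (Qᵀ * B i) ∧
      Q'.mulVec v = -((Q).mulVec v) :=
    fun i => exists_max_orth_signs (B i) (exists_max_orth (B i)) v hvv (hBv i)
  choose Q Q' hQ hQ' hQmax hQ'tr hQ'v using hmaxi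
  set zeta : Fin N → Fin d → ℝ := fun i => (Q i).mulVec v with hzeta
  set u : Fin d × Fin T → ℝ := (L i0).mulVec (hatv t (zeta i0)) with hu
  set w : Fin N → Fin d → ℝ := fun i => fun j => ((L i)ᵀ.mulVec u) (j, t) with hw
  set Qt : Fin N → Matrix (Fin d) (Fin d) ℝ :=
    fun i => if 0 ≤ zeta i ⬝ᵥ w i then Q i else Q' i with hQt
  set rho : Fin N → ℝ := fun i => |zeta i ⬝ᵥ w i| with hrho
  have hQtOrth : ∀ i, IsOrth (Qt i) := by
    intro i
    by_cases h : 0 ≤ zeta i ⬝ᵥ w i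
    · simp only [hQt, if_pos h]; exact hQ i
    · simp only [hQt, if_neg h]; exact hQ' i
  have hQtmax : ∀ i R, IsOrth R → Matrix.trace (Rᵀ * B i) ≤ Matrix.trace ((Qt i)ᵀ * B i) := by
    intro i R hR
    by_cases h : 0 ≤ zeta i ⬝ᵥ w i
    · simp only [hQt, if_pos h]; exact hQmax i R hR
    · simp only [hQt, if_neg h]; rw [hQ'tr i]; exact hQmax i R hR
  have hQtv : ∀ i, w i ⬝ᵥ (Qt i).mulVec v = rho i := by
    intro i
    by_cases h : 0 ≤ zeta i ⬝ᵥ w i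
    · simp only [hQt, if_pos h, hrho]
      rw [dotProduct_comm, abs_of_nonneg h]
    · simp only [hQt, if_neg h, hrho]
      rw [hQ'v i, dotProduct_neg, dotProduct_comm, abs_of_neg (lt_of_not_ge h)]
  have hrho_nonneg : ∀ i, 0 ≤ rho i := fun i => abs_nonneg _
  -- positivity of the leading gain
  have hzw0 : zeta i0 ⬝ᵥ w i0 = u ⬝ᵥ u := by
    have := dot_hat_column t (L i0) u (zeta i0)
    rw [hw]
    simp only
    rw [this, ← hu]
  have hupos : 0 < u ⬝ᵥ u := by
    have hz0 : zeta i0 ≠ 0 := by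
      intro h
      apply hv0
      have h1 : (Q i0)ᵀ.mulVec (zeta i0) = v := by
        rw [hzeta]
        simp only
        rw [Matrix.mulVec_mulVec, (hQ i0).2, Matrix.one_mulVec]
      rw [h, Matrix.mulVec_zero] at h1
      exact h1.symm
    have hpd := (hreg i0 t).dotProduct_mulVec_pos hz0
    have hq := quad (L i0) (zeta i0)
    rw [← hu] at hq
    calc (0:ℝ) < _ := hpd
    _ = u ⬝ᵥ u := by rw [show star (zeta i0) = zeta i0 from star_trivial _, ← hq]
  have hrho0 : rho i0 = u ⬝ᵥ u := by
    rw [hrho]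
    simp only
    rw [hzw0, abs_of_pos hupos]
  -- the perturbation matrix
  have hu_supp : ∀ a : Fin d × Fin T, a.2 < t → u a = 0 := by
    intro a ha
    rw [hu]
    simp only [Matrix.mulVec, dotProduct, hatv]
    apply Finset.sum_eq_zero
    rintro ⟨k, r⟩ _
    by_cases hr : r = t
    · rw [hL i0 a (k, r) (by simpa [hr] using ha)]
      ring
    · simp [hr]
  set E : Matrix (Fin d × Fin T) (Fin d × Fin T) ℝ := Matrix.vecMulVec u (hatv t v) with hE
  have hELT : BlockLT E := by
    intro p q hpq
    rw [hE, Matrix.vecMulVec_apply]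
    by_cases hq : q.2 = t
    · rw [hu_supp p (hq ▸ hpq)]; ring
    · simp [hatv, hq]
  have hEL0 : Matrix.trace (Eᵀ * Lbar) = 0 := by
    rw [hE, trace_transpose_vecMulVec_mul, hker, dotProduct_zero]
  -- main per-input perturbation estimate
  have key : ∀ (e : ℝ) (i : Fin N) (O : Matrix (Fin d × Fin T) (Fin d × Fin T) ℝ),
      BlockOrth O → ∃ O', BlockOrth O' ∧
        frobSq (Lbar + e • E - L i * O')
          ≤ frobSq (Lbar - L i * O) + e^2 * frobSq E - 2 * e * rho i := by
    intro e i O hO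
    obtain ⟨f, hf, rfl⟩ := hO
    set g : Fin T → Matrix (Fin d) (Fin d) ℝ := fun s => if s = t then Qt i else f s with hg
    have hgOrth : ∀ s, IsOrth (g s) := by
      intro s
      by_cases hs : s = t
      · simp only [hg, if_pos hs]; exact hQtOrth i
      · simp only [hg, if_neg hs]; exact hf s
    refine ⟨Matrix.blockDiagonal g, ⟨g, hgOrth, rfl⟩, ?_⟩
    rw [frob_expand _ _ _ hgOrth, frob_expand _ _ _ hf]
    rw [frobSq_add_smul, hEL0]
    -- decompose the diagonal blocks of (L i)ᵀ (Lbar + e E)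
    have hC : ∀ s, diagBlock ((L i)ᵀ * (Lbar + e • E)) s
        = diagBlock ((L i)ᵀ * Lbar) s + e • diagBlock ((L i)ᵀ * E) s := by
      intro s
      rw [Matrix.mul_add, Matrix.mul_smul, diagBlock_add, diagBlock_smul]
    have hAE : (L i)ᵀ * E = Matrix.vecMulVec ((L i)ᵀ.mulVec u) (hatv t v) := by
      rw [hE, mul_vecMulVec']
    have hDs : ∀ s, s ≠ t → diagBlock ((L i)ᵀ * E) s = 0 := by
      intro s hs
      rw [hAE]
      exact diagBlock_vecMulVec_ne t _ v s hs
    have hDt : diagBlock ((L i)ᵀ * E) t = Matrix.vecMulVec (w i) v := by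
      rw [hAE, diagBlock_vecMulVec_eq]
    -- compare the two trace sums
    have hterm : ∀ s, Matrix.trace ((f s)ᵀ * diagBlock ((L i)ᵀ * Lbar) s)
          + (if s = t then e * rho i else 0)
        ≤ Matrix.trace ((g s)ᵀ * diagBlock ((L i)ᵀ * (Lbar + e • E)) s) := by
      intro s
      by_cases hs : s = t
      · subst hs
        rw [if_pos rfl, hC s, hDt]
        simp only [hg, if_pos rfl]
        rw [Matrix.mul_add, Matrix.trace_add, Matrix.mul_smul, Matrix.trace_smul,
          trace_transpose_mul_vecMulVec, hQtv i, smul_eq_mul]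
        have := hQtmax i (f s) (hf s)
        rw [hB] at this
        simp only at this
        linarith
      · rw [hC s, hDs s hs]
        simp only [hg, if_neg hs, smul_zero, add_zero, if_neg hs]
        linarith [le_refl (Matrix.trace ((f s)ᵀ * diagBlock ((L i)ᵀ * Lbar) s))]
    have hsum2 : (∑ s, Matrix.trace ((f s)ᵀ * diagBlock ((L i)ᵀ * Lbar) s)) + e * rho i
        ≤ ∑ s, Matrix.trace ((g s)ᵀ * diagBlock ((L i)ᵀ * (Lbar + e • E)) s) := by
      have h1 := Finset.sum_le_sum (fun s (_ : s ∈ Finset.univ) => hterm s)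
      rw [Finset.sum_add_distrib, Finset.sum_ite_eq' Finset.univ t
        (fun _ => e * rho i)] at h1
      simpa using h1
    linarith
  -- choose the step size and the near-optimal rotations
  set F : ℝ := frobSq E with hF
  have hF0 : 0 ≤ F := frobSq_nonneg E
  set r0 : ℝ := lam i0 * rho i0 with hr0
  have hr0pos : 0 < r0 := by
    rw [hr0, hrho0]
    exact mul_pos (hlam i0) hupos
  set e : ℝ := r0 / (F + 1) with he
  have hepos : 0 < e := div_pos hr0pos (by linarith)
  have heF : e * (F + 1) = r0 := by
    rw [he]
    field_simp
  set dlt : ℝ := e * r0 / 2 with hdlt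
  have hdltpos : 0 < dlt := by positivity
  set K : Matrix (Fin d × Fin T) (Fin d × Fin T) ℝ := Lbar + e • E with hK
  have hKLT : BlockLT K := by
    intro p q hpq
    rw [hK]
    simp only [Matrix.add_apply, Matrix.smul_apply, hLbar p q hpq, hELT p q hpq,
      smul_eq_mul, mul_zero, add_zero]
  -- near-optimal rotations for Lbar
  have hnear : ∀ i : Fin N, ∃ O, BlockOrth O ∧
      frobSq (Lbar - L i * O) < dABWsq Lbar (L i) + dlt := by
    intro i
    have hne : {x : ℝ | ∃ O, BlockOrth O ∧ x = frobSq (Lbar - L i * O)}.Nonempty := by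
      refine ⟨frobSq (Lbar - L i * Matrix.blockDiagonal (fun _ => 1)), ?_⟩
      exact ⟨Matrix.blockDiagonal (fun _ => 1), ⟨fun _ => 1, fun _ => isOrth_one, rfl⟩, rfl⟩
    obtain ⟨a, ⟨O, hO, ha⟩, hlt⟩ := Real.lt_sInf_add_pos hne hdltpos
    exact ⟨O, hO, by rw [← ha]; exact hlt⟩
  choose Obar hObar hOlt using hnear
  -- the contradiction
  have hup : ∀ i : Fin N, dABWsq K (L i) < dABWsq Lbar (L i) + dlt + e^2 * F - 2 * e * rho i := by
    intro i
    obtain ⟨O', hO', hle⟩ := key e i (Obar i) (hObar i)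
    have hmem : frobSq (K - L i * O') ∈
        {x : ℝ | ∃ O, BlockOrth O ∧ x = frobSq (K - L i * O)} := ⟨O', hO', rfl⟩
    have hbdd : BddBelow {x : ℝ | ∃ O, BlockOrth O ∧ x = frobSq (K - L i * O)} := by
      refine ⟨0, ?_⟩
      rintro x ⟨O, hO, rfl⟩
      exact frobSq_nonneg _
    have h1 : dABWsq K (L i) ≤ frobSq (K - L i * O') := csInf_le hbdd hmem
    have h2 := hOlt i
    rw [hK] at h1
    calc dABWsq K (L i) ≤ frobSq (Lbar + e • E - L i * O') := h1
    _ ≤ frobSq (Lbar - L i * Obar i) + e^2 * frobSq E - 2 * e * rho i := hle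
    _ < dABWsq Lbar (L i) + dlt + e^2 * F - 2 * e * rho i := by
        rw [← hF]; linarith
  have hsumlt : ∑ i, lam i * dABWsq K (L i)
      < ∑ i, lam i * (dABWsq Lbar (L i) + dlt + e^2 * F - 2 * e * rho i) := by
    refine Finset.sum_lt_sum_of_nonempty ⟨i0, Finset.mem_univ i0⟩ fun i _ => ?_
    exact mul_lt_mul_of_pos_left (hup i) (hlam i)
  have hsingle : r0 ≤ ∑ i, lam i * rho i := by
    rw [hr0]
    exact Finset.single_le_sum
      (f := fun i => lam i * rho i)
      (fun i _ => mul_nonneg (le_of_lt (hlam i)) (hrho_nonneg i)) (Finset.mem_univ i0)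
  have hRHS : ∑ i, lam i * (dABWsq Lbar (L i) + dlt + e^2 * F - 2 * e * rho i)
      = (∑ i, lam i * dABWsq Lbar (L i)) + (dlt + e^2 * F) * (∑ i, lam i)
        - 2 * e * ∑ i, lam i * rho i := by
    rw [Finset.mul_sum, Finset.mul_sum, ← Finset.sum_add_distrib, ← Finset.sum_sub_distrib]
    refine Finset.sum_congr rfl fun i _ => ?_
    ring
  have he2F : e^2 * F ≤ e * r0 := by
    have h1 : e * F ≤ e * (F + 1) := by nlinarith
    calc e^2 * F = e * (e * F) := by ring
    _ ≤ e * (e * (F + 1)) := by nlinarith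
    _ = e * r0 := by rw [heF]
  have hfinal : ∑ i, lam i * dABWsq K (L i) < ∑ i, lam i * dABWsq Lbar (L i) := by
    calc ∑ i, lam i * dABWsq K (L i)
        < ∑ i, lam i * (dABWsq Lbar (L i) + dlt + e^2 * F - 2 * e * rho i) := hsumlt
    _ = (∑ i, lam i * dABWsq Lbar (L i)) + (dlt + e^2 * F) * (∑ i, lam i)
        - 2 * e * ∑ i, lam i * rho i := hRHS
    _ = (∑ i, lam i * dABWsq Lbar (L i)) + (dlt + e^2 * F)
        - 2 * e * ∑ i, lam i * rho i := by rw [hsum, mul_one]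
    _ ≤ (∑ i, lam i * dABWsq Lbar (L i)) + (dlt + e * r0) - 2 * e * r0 := by
        have h2 : 2 * e * r0 ≤ 2 * e * ∑ i, lam i * rho i := by nlinarith
        linarith
    _ ≤ ∑ i, lam i * dABWsq Lbar (L i) := by
        rw [hdlt]
        linarith
  exact absurd (hmin K hKLT) (not_le.mpr hfinal)
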